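/- arXiv:1908.01894 — 4 statements merged into one kernel-verified Lean document; each statement's English description precedes it below -/
import Mathlib

section
/- In the synchronous CONGEST broadcast gossip process with k initial messages on a connected graph of diameter D, for every round r ≥ 1, every vertex v, and every message m: if dist(v, origin(m)) + ℓ = r, then after round r either v has already broadcast m, or v has broadcast at least ℓ distinct messages. -/
/-!
A vertex broadcasts a new message in every round in which it holds one it has not yet sent.
Induct on `r`: unless `v` is the origin of `m`, it has a neighbour `w` one step closer to
`origin m`, so by round `r - 1` the vertex `w` has broadcast either `m` or at least `ℓ + 1`
messages. In the first case `m` is pending at `v` in round `r`; in the second, either all of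
`w`'s messages are already among `v`'s, or one of them is pending at `v`. A pending message
adds one to the `ℓ - 1` messages that induction provides at `v` itself.
-/

/-- The synchronous CONGEST broadcast gossip process with `k` messages on the graph `G`,
where message `m` initially resides at `origin m`.  `B v r` is the message broadcast by
vertex `v` in round `r` (rounds are numbered from `1`), if any.  A vertex may only broadcast
a message it holds (its own, or one received from a neighbor in an earlier round) and has not
broadcast before; and a vertex with a pending unsent message must broadcast some message. -/
structure GossipProcess {V : Type*} (G : SimpleGraph V) (k : ℕ) (origin : Fin k → V) where
  B : V → ℕ → Option (Fin k)
  init : ∀ v : V, B v 0 = none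
  valid : ∀ (v : V) (r : ℕ) (m : Fin k), B v r = some m →
    (origin m = v ∨ ∃ r' < r, ∃ u : V, G.Adj u v ∧ B u r' = some m) ∧
    ¬ ∃ r' < r, B v r' = some m
  active : ∀ (v : V) (r : ℕ), 1 ≤ r →
    (∃ m : Fin k, (origin m = v ∨ ∃ r' < r, ∃ u : V, G.Adj u v ∧ B u r' = some m) ∧
      ¬ ∃ r' < r, B v r' = some m) → B v r ≠ none

namespace SimpleGraph

variable {V : Type*} {G : SimpleGraph V} {u v : V}

lemma exists_adj_dist_add_one_eq (h : G.dist u v ≠ 0) :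
    ∃ w, G.Adj u w ∧ G.dist w v + 1 = G.dist u v := by
  obtain ⟨p, hp⟩ := exists_walk_of_dist_ne_zero h
  cases p with
  | nil => exact absurd hp.symm h
  | @cons _ w _ hadj q =>
    refine ⟨w, hadj, le_antisymm ?_ ?_⟩
    · simpa [← hp] using dist_le q
    · calc G.dist u v ≤ G.dist u w + G.dist w v := hadj.reachable.dist_triangle_left v
        _ = G.dist w v + 1 := by rw [dist_eq_one_iff_adj.mpr hadj, add_comm]

end SimpleGraph

namespace GossipProcess

variable {V : Type*} {G : SimpleGraph V} {k : ℕ} {origin : Fin k → V}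
  (P : GossipProcess G k origin)

def sent (v : V) (r : ℕ) : Set (Fin k) :=
  {m | ∃ r' ≤ r, P.B v r' = some m}

variable {P}

lemma sent_mono (v : V) {r s : ℕ} (h : r ≤ s) : P.sent v r ⊆ P.sent v s :=
  fun _ ⟨r', hr', hb⟩ ↦ ⟨r', hr'.trans h, hb⟩

lemma ncard_sent_le_succ (v : V) (n : ℕ) : (P.sent v n).ncard ≤ (P.sent v (n + 1)).ncard :=
  Set.ncard_le_ncard (sent_mono v n.le_succ) (Set.toFinite _)

lemma ncard_sent_lt_succ {v : V} {n : ℕ} {m : Fin k} (hm : m ∉ P.sent v n)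
    (hheld : origin m = v ∨ ∃ u, G.Adj u v ∧ m ∈ P.sent u n) :
    (P.sent v n).ncard < (P.sent v (n + 1)).ncard := by
  have hpending : ∃ m : Fin k,
      (origin m = v ∨ ∃ r' < n + 1, ∃ u : V, G.Adj u v ∧ P.B u r' = some m) ∧
        ¬ ∃ r' < n + 1, P.B v r' = some m := by
    refine ⟨m, ?_, fun ⟨r', hr', hb⟩ ↦ hm ⟨r', Nat.lt_succ_iff.mp hr', hb⟩⟩
    rcases hheld with ho | ⟨u, hadj, r', hr', hb⟩
    · exact Or.inl ho
    · exact Or.inr ⟨r', Nat.lt_succ_of_le hr', u, hadj, hb⟩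
  obtain ⟨m', hm'⟩ := Option.ne_none_iff_exists'.mp (P.active v (n + 1) n.succ_pos hpending)
  have hnew : m' ∉ P.sent v n := fun ⟨r', hr', hb⟩ ↦
    (P.valid v (n + 1) m' hm').2 ⟨r', Nat.lt_succ_of_le hr', hb⟩
  have hsub : insert m' (P.sent v n) ⊆ P.sent v (n + 1) :=
    Set.insert_subset ⟨n + 1, le_rfl, hm'⟩ (sent_mono v n.le_succ)
  calc (P.sent v n).ncard < (insert m' (P.sent v n)).ncard :=
        by rw [Set.ncard_insert_of_notMem hnew (Set.toFinite _)]; exact Nat.lt_succ_self _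
    _ ≤ (P.sent v (n + 1)).ncard := Set.ncard_le_ncard hsub (Set.toFinite _)

lemma min_ncard_sent_le_of_adj {v w : V} (hadj : G.Adj w v) (n : ℕ) :
    min (P.sent w n).ncard ((P.sent v n).ncard + 1) ≤ (P.sent v (n + 1)).ncard := by
  by_cases hsub : P.sent w n ⊆ P.sent v n
  · exact min_le_of_left_le <|
      (Set.ncard_le_ncard hsub (Set.toFinite _)).trans (ncard_sent_le_succ v n)
  · obtain ⟨m, hmw, hmv⟩ := Set.not_subset.mp hsub
    exact min_le_of_right_le (ncard_sent_lt_succ hmv (Or.inr ⟨w, hadj, hmw⟩))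

theorem mem_sent_or_le_ncard_sent {r : ℕ} {v : V} {m : Fin k} {ℓ : ℕ}
    (hreach : G.Reachable v (origin m)) (h : G.dist v (origin m) + ℓ = r) :
    m ∈ P.sent v r ∨ ℓ ≤ (P.sent v r).ncard := by
  induction r generalizing v ℓ with
  | zero => exact Or.inr (by omega)
  | succ n ih =>
    obtain _ | ℓ := ℓ
    · exact Or.inr (Nat.zero_le _)
    refine or_iff_not_imp_left.mpr fun hm ↦ ?_
    have hm' : m ∉ P.sent v n := fun hmn ↦ hm (sent_mono v n.le_succ hmn)
    have hv : ℓ ≤ (P.sent v n).ncard := (ih hreach (by omega)).resolve_left hm'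
    by_cases hd : G.dist v (origin m) = 0
    · have hvo : v = origin m := (hreach.dist_eq_zero_iff).mp hd
      have := ncard_sent_lt_succ hm' (Or.inl hvo.symm)
      omega
    obtain ⟨w, hvw, hw⟩ := SimpleGraph.exists_adj_dist_add_one_eq hd
    rcases ih (hvw.reachable.symm.trans hreach) (ℓ := ℓ + 1) (by omega) with hmw | hlw
    · have := ncard_sent_lt_succ hm' (Or.inr ⟨w, hvw.symm, hmw⟩)
      omega
    · have := min_ncard_sent_le_of_adj (P := P) hvw.symm n
      omega

end GossipProcess

theorem stmt_6_general {V : Type*} (G : SimpleGraph V) (hG : G.Connected) (k : ℕ)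
    (origin : Fin k → V) (P : GossipProcess G k origin)
    (r : ℕ) (v : V) (m : Fin k) (ℓ : ℕ)
    (h : G.dist v (origin m) + ℓ = r) :
    (∃ r' ≤ r, P.B v r' = some m) ∨
      ℓ ≤ Set.ncard {m' : Fin k | ∃ r' ≤ r, P.B v r' = some m'} :=
  GossipProcess.mem_sent_or_le_ncard_sent (hG v (origin m)) h

/-- Invariant of broadcast gossip: for every round `r ≥ 1`, vertex `v`, message `m` and
`ℓ` with `dist(v, origin m) + ℓ = r`, after round `r` either `v` has already broadcast `m`,
or `v` has broadcast at least `ℓ` distinct messages. -/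
theorem stmt_6 {V : Type*} (G : SimpleGraph V) (hG : G.Connected) (k : ℕ)
    (origin : Fin k → V) (P : GossipProcess G k origin)
    (r : ℕ) (hr : 1 ≤ r) (v : V) (m : Fin k) (ℓ : ℕ)
    (h : G.dist v (origin m) + ℓ = r) :
    (∃ r' ≤ r, P.B v r' = some m) ∨
      ℓ ≤ Set.ncard {m' : Fin k | ∃ r' ≤ r, P.B v r' = some m'} :=
  stmt_6_general G hG k origin P r v m ℓ h
end

section
/- If any schedule in the mobile telephone model achieves pairwise throughput T on instance (G, F), then the flow network D_{2T} admits a concurrent multi-commodity flow of value 2T. Consequently the optimal throughput is at most τ*/2, where τ* is the largest τ for which D_τ has a concurrent flow of value τ. -/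
/-- A pairwise schedule in the mobile telephone model for the flow pairs `F` on `G`:
packets are pairs `(commodity, index)`; each round's connections
`(sender, receiver, commodity, index)` respect adjacency and form a matching (so every
vertex handles at most one packet per round), and a packet can only be sent by the source of
its commodity or by a vertex that received it in an earlier round. -/
structure PairSchedule {V : Type*} (G : SimpleGraph V) {K : ℕ} (F : Fin K → V × V) where
  M : ℕ → Set (V × V × Fin K × ℕ)
  adj : ∀ (r : ℕ) (x : V × V × Fin K × ℕ), x ∈ M r → G.Adj x.1 x.2.1
  matching : ∀ (r : ℕ) (x y : V × V × Fin K × ℕ), x ∈ M r → y ∈ M r → x ≠ y →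
    x.1 ≠ y.1 ∧ x.1 ≠ y.2.1 ∧ x.2.1 ≠ y.1 ∧ x.2.1 ≠ y.2.1
  valid : ∀ (r : ℕ) (x : V × V × Fin K × ℕ), x ∈ M r →
    x.1 = (F x.2.2.1).1 ∨ ∃ r' < r, ∃ w : V, (w, x.1, x.2.2) ∈ M r'

/-- Packet `(i, j)` has reached the destination of pair `i` by round `r`. -/
def PDelivered {V : Type*} {G : SimpleGraph V} {K : ℕ} {F : Fin K → V × V}
    (σ : PairSchedule G F) (i : Fin K) (j r : ℕ) : Prop :=
  ∃ t ≤ r, ∃ u : V, (u, (F i).2, i, j) ∈ σ.M t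

/-- The schedule achieves pairwise throughput `T`. -/
def PThroughput {V : Type*} {G : SimpleGraph V} {K : ℕ} {F : Fin K → V × V}
    (σ : PairSchedule G F) (T : ℝ) : Prop :=
  ∃ r0 : ℕ, ∀ r : ℕ, r0 ≤ r → ∀ (i : Fin K) (j : ℕ), 1 ≤ j → (j : ℝ) ≤ T * r →
    PDelivered σ i j r

/-- The number of pairs of `F` in which the vertex `v` occurs. -/
def tOcc {V : Type*} [Fintype V] [DecidableEq V] {K : ℕ} (F : Fin K → V × V) (v : V) : ℕ :=
  (Finset.univ.filter (fun i : Fin K => (F i).1 = v ∨ (F i).2 = v)).card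

/-- `f` is a concurrent multi-commodity flow of value `val` on the split network `D_τ`:
vertices are split into in-copies (`Sum.inl`) and out-copies (`Sum.inr`); edges are
`(u^out, v^in)` for edges `uv` of `G` (infinite capacity) and internal edges `(v^in, v^out)`
of capacity `1 + t_v·τ/2`; commodity `i` goes from `(F i).1^in` to `(F i).2^out`, each
commodity shipping at least `val`. -/
def IsSplitFlow {V : Type*} [Fintype V] [DecidableEq V] (G : SimpleGraph V) {K : ℕ}
    (F : Fin K → V × V) (τ : ℝ) (f : Fin K → (V ⊕ V) → (V ⊕ V) → ℝ) (val : ℝ) : Prop :=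
  (∀ (i : Fin K) (a b : V ⊕ V), 0 ≤ f i a b) ∧
  (∀ (i : Fin K) (a b : V ⊕ V), f i a b ≠ 0 →
    (∃ u w : V, a = Sum.inr u ∧ b = Sum.inl w ∧ G.Adj u w) ∨
    (∃ w : V, a = Sum.inl w ∧ b = Sum.inr w)) ∧
  (∀ (i : Fin K) (a : V ⊕ V), a ≠ Sum.inl (F i).1 → a ≠ Sum.inr (F i).2 →
    ∑ b : V ⊕ V, f i b a = ∑ b : V ⊕ V, f i a b) ∧
  (∀ v : V, ∑ i : Fin K, f i (Sum.inl v) (Sum.inr v) ≤ 1 + (tOcc F v : ℝ) * τ / 2) ∧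
  (∀ i : Fin K, val ≤ ∑ b : V ⊕ V, f i (Sum.inl (F i).1) b)

/-!
Let `N` packets of every commodity be delivered within the rounds `0, …, R`. The trajectory of
each packet contains a simple path from the source to the destination all of whose edges are
transmissions of that packet; routing `τ / N` units along each of these paths gives a flow of
value `τ` in the split network. A vertex of such a path is incident to two of its edges, or to
one if it is an endpoint, and since a vertex takes part in at most one transmission per round,
at most `R + 1` path edges are incident to it. Hence at most `τ (R + 1) / (2N) + t_v τ / 2` flow
passes through `v`. Throughput `T` allows `τ = 2T` with `T (R + 1) / N` arbitrarily close to
`1`, and since these flows are bounded, a limit point is a flow in `D_{2T}`.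
-/

open Finset Sum

theorem List.sum_countP_eq_and {α β : Type*} [Fintype β] [DecidableEq β] (l : List α)
    (f : α → β) (q : α → Prop) [DecidablePred q] :
    ∑ b, l.countP (fun x => f x = b ∧ q x) = l.countP q := by
  induction l with
  | nil => simp
  | cons x l ih =>
    simp only [List.countP_cons, sum_add_distrib, ih]
    by_cases h : q x <;> simp [h]

namespace SimpleGraph

theorem Dart.countP_fst_or_snd {V : Type*} [DecidableEq V] {G : SimpleGraph V}
    (l : List G.Dart) (v : V) :
    l.countP (fun e => e.fst = v ∨ e.snd = v) = l.countP (·.fst = v) + l.countP (·.snd = v) := by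
  induction l with
  | nil => simp
  | cons e l ih =>
    have := e.adj.ne
    simp only [List.countP_cons, ih]
    by_cases h1 : e.fst = v <;> by_cases h2 : e.snd = v <;> simp_all <;> omega

namespace Walk
variable {V : Type*} [DecidableEq V] {G : SimpleGraph V} {s d : V}

theorem count_support_eq_countP_snd_add (p : G.Walk s d) (v : V) :
    p.support.count v = p.darts.countP (·.snd = v) + if s = v then 1 else 0 := by
  rw [← p.cons_tail_support, ← p.map_snd_darts, List.count_cons, List.count, List.countP_map]
  simp [Function.comp_def, Bool.beq_eq_decide_eq]

theorem count_support_eq_countP_fst_add (p : G.Walk s d) (v : V) :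
    p.support.count v = p.darts.countP (·.fst = v) + if d = v then 1 else 0 := by
  rw [← p.map_fst_darts_append, List.count_append, List.count, List.countP_map]
  simp [Function.comp_def, Bool.beq_eq_decide_eq]

theorem two_mul_count_support (p : G.Walk s d) (v : V) :
    2 * p.support.count v = p.darts.countP (fun e => e.fst = v ∨ e.snd = v) +
      ((if s = v then 1 else 0) + if d = v then 1 else 0) := by
  rw [Dart.countP_fst_or_snd, two_mul]
  nth_rw 1 [count_support_eq_countP_fst_add, count_support_eq_countP_snd_add]
  ring

def splitFlow (p : G.Walk s d) : V ⊕ V → V ⊕ V → ℝ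
  | inr u, inl w => p.darts.countP (fun e => e.fst = u ∧ e.snd = w)
  | inl v, inr w => if v = w then p.support.count v else 0
  | _, _ => 0

variable (p : G.Walk s d)

theorem splitFlow_nonneg (a b : V ⊕ V) : 0 ≤ p.splitFlow a b := by
  rcases a with a | a <;> rcases b with b | b <;> simp only [splitFlow] <;> positivity

theorem splitFlow_ne_zero {a b : V ⊕ V} (h : p.splitFlow a b ≠ 0) :
    (∃ u w, a = inr u ∧ b = inl w ∧ G.Adj u w) ∨ ∃ w, a = inl w ∧ b = inr w := by
  rcases a with u | u <;> rcases b with w | w <;> simp only [splitFlow] at h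
  · exact absurd rfl h
  · exact Or.inr ⟨u, rfl, by rw [(ite_ne_right_iff.mp h).1]⟩
  · obtain ⟨e, -, he⟩ := List.countP_pos_iff.mp (Nat.pos_of_ne_zero (by exact_mod_cast h))
    simp only [decide_eq_true_eq] at he
    exact Or.inl ⟨u, w, rfl, rfl, he.1 ▸ he.2 ▸ e.adj⟩
  · exact absurd rfl h

theorem splitFlow_inl_inr (v : V) : p.splitFlow (inl v) (inr v) = p.support.count v := by
  simp [splitFlow]

theorem IsPath.splitFlow_le_one {p : G.Walk s d} (hp : p.IsPath) (a b : V ⊕ V) :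
    p.splitFlow a b ≤ 1 := by
  have hcount := List.nodup_iff_count_le_one.mp hp.support_nodup
  rcases a with u | u <;> rcases b with w | w <;> simp only [splitFlow]
  · norm_num
  · split_ifs
    · exact_mod_cast hcount u
    · norm_num
  · have hle : p.darts.countP (fun e => e.fst = u ∧ e.snd = w) ≤ p.support.count u := by
      rw [count_support_eq_countP_fst_add]
      exact (List.countP_mono_left fun e _ h => by simp_all).trans (Nat.le_add_right _ _)
    exact_mod_cast hle.trans (hcount u)
  · norm_num

theorem sum_splitFlow_comm [Fintype V] {a : V ⊕ V} (hs : a ≠ inl s) (hd : a ≠ inr d) :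
    ∑ b, p.splitFlow b a = ∑ b, p.splitFlow a b := by
  rcases a with v | v <;> simp only [Fintype.sum_sum_type, splitFlow, sum_const_zero,
    zero_add, add_zero, sum_ite_eq, sum_ite_eq', mem_univ, if_true]
  · rw [← Nat.cast_sum, List.sum_countP_eq_and p.darts (·.fst) (·.snd = v),
      count_support_eq_countP_snd_add, if_neg (fun h : s = v => hs (h ▸ rfl)), add_zero]
  · simp_rw [← Nat.cast_sum, and_comm (a := _ = v)]
    rw [List.sum_countP_eq_and p.darts (·.snd) (·.fst = v),
      count_support_eq_countP_fst_add, if_neg (fun h : d = v => hd (h ▸ rfl)), add_zero]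

end Walk
end SimpleGraph

namespace PairSchedule

variable {V : Type*} {G : SimpleGraph V} {K : ℕ} {F : Fin K → V × V} (σ : PairSchedule G F)

def Carries (k : Fin K × ℕ) (R : ℕ) {a b : V} (p : G.Walk a b) : Prop :=
  ∀ e ∈ p.darts, ∃ t ≤ R, (e.fst, e.snd, k) ∈ σ.M t

variable {σ} in
theorem Carries.mono {k : Fin K × ℕ} {R R' : ℕ} {a b : V} {p : G.Walk a b}
    (h : σ.Carries k R p) (hR : R ≤ R') : σ.Carries k R' p := fun e he =>
  let ⟨t, ht, hm⟩ := h e he; ⟨t, ht.trans hR, hm⟩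

theorem exists_walk_carries_of_mem {t : ℕ} {u v : V} {k : Fin K × ℕ}
    (h : (u, v, k) ∈ σ.M t) : ∃ p : G.Walk (F k.1).1 v, σ.Carries k t p := by
  induction t using Nat.strong_induction_on generalizing u v with
  | _ t ih =>
    have hadj : G.Adj u v := σ.adj t _ h
    rcases σ.valid t _ h with hsrc | ⟨t', ht', w, hw⟩
    · obtain rfl : u = (F k.1).1 := hsrc
      refine ⟨.cons hadj .nil, fun e he => ⟨t, le_rfl, ?_⟩⟩
      simp only [SimpleGraph.Walk.darts_cons, SimpleGraph.Walk.darts_nil,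
        List.mem_singleton] at he
      exact he ▸ h
    · obtain ⟨q, hq⟩ := ih t' ht' hw
      refine ⟨q.concat hadj, fun e he => ?_⟩
      rw [SimpleGraph.Walk.darts_concat, List.concat_eq_append, List.mem_append,
        List.mem_singleton] at he
      rcases he with he | rfl
      · exact (hq.mono ht'.le) e he
      · exact ⟨t, le_rfl, h⟩

theorem exists_isPath_carries_of_delivered {i : Fin K} {j R : ℕ} (h : PDelivered σ i j R) :
    ∃ p : G.Walk (F i).1 (F i).2, p.IsPath ∧ σ.Carries (i, j) R p := by
  classical
  obtain ⟨t, ht, u, hu⟩ := h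
  obtain ⟨p, hp⟩ := σ.exists_walk_carries_of_mem (k := (i, j)) hu
  exact ⟨p.bypass, p.bypass_isPath, fun e he => (hp.mono ht) e (p.darts_bypass_subset_darts he)⟩

theorem eq_of_mem_of_incident {t : ℕ} {v : V} {x y : V × V × Fin K × ℕ}
    (hx : x ∈ σ.M t) (hy : y ∈ σ.M t) (hxv : x.1 = v ∨ x.2.1 = v) (hyv : y.1 = v ∨ y.2.1 = v) :
    x = y := by
  by_contra hne
  have := σ.matching t x y hx hy hne
  rcases hxv with rfl | rfl <;> rcases hyv with h | h <;> tauto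

theorem sum_countP_incident_le [DecidableEq V] {ι : Type*} [Fintype ι] {pk : ι → Fin K × ℕ}
    (hpk : Function.Injective pk) {a b : ι → V} (P : ∀ x, G.Walk (a x) (b x))
    (hP : ∀ x, (P x).IsPath) {R : ℕ} (hc : ∀ x, σ.Carries (pk x) R (P x)) (v : V) :
    ∑ x, (P x).darts.countP (fun e => e.fst = v ∨ e.snd = v) ≤ R + 1 := by
  set S := univ.sigma fun x => ((P x).darts.filter fun e => e.fst = v ∨ e.snd = v).toFinset
  have hS : ∑ x, (P x).darts.countP (fun e => e.fst = v ∨ e.snd = v) = S.card := by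
    rw [card_sigma]
    refine sum_congr rfl fun x _ => ?_
    rw [List.toFinset_card_of_nodup
      ((SimpleGraph.Walk.darts_nodup_of_support_nodup (hP x).support_nodup).filter _),
      List.countP_eq_length_filter]
  have hround : ∀ y ∈ S, ∃ t ≤ R, (y.2.fst, y.2.snd, pk y.1) ∈ σ.M t := by
    intro y hy
    simp only [S, mem_sigma, mem_univ, true_and, List.mem_toFinset, List.mem_filter] at hy
    exact hc y.1 y.2 hy.1
  choose! rnd hrnd_le hrnd_mem using hround
  have hinj : Set.InjOn rnd S := by
    intro y hy y' hy' h
    have hv : ∀ y ∈ S, y.2.fst = v ∨ y.2.snd = v := fun y hy => by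
      simp only [S, mem_sigma, mem_univ, true_and, List.mem_toFinset, List.mem_filter,
        decide_eq_true_eq] at hy
      exact hy.2
    have := σ.eq_of_mem_of_incident (hrnd_mem y hy) (h ▸ hrnd_mem y' hy') (hv y hy)
      (hv y' hy')
    simp only [Prod.mk.injEq] at this
    exact Sigma.ext (hpk this.2.2)
      (heq_of_eq (SimpleGraph.Dart.ext _ _ (Prod.ext this.1 this.2.1)))
  calc _ = S.card := hS
    _ ≤ (range (R + 1)).card :=
      card_le_card_of_injOn rnd
        (fun y hy => mem_range.mpr (Nat.lt_succ_of_le (hrnd_le y hy))) hinj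
    _ = R + 1 := card_range _

end PairSchedule

theorem PThroughput.exists_delivered {V : Type*} {G : SimpleGraph V} {K : ℕ}
    {F : Fin K → V × V} {σ : PairSchedule G F} {T : ℝ} (hT : 0 < T)
    (h : PThroughput σ T) {ε : ℝ} (hε : 0 < ε) :
    ∃ N R : ℕ, 0 < N ∧ (∀ i (j : Fin N), PDelivered σ i (j + 1) R) ∧
      T * (R + 1) ≤ (1 + ε) * N := by
  obtain ⟨r0, hr0⟩ := h
  obtain ⟨N, hN⟩ := exists_nat_gt (T * (r0 + 2) / ε)
  have hNpos : (0 : ℝ) < N := lt_trans (by positivity) hN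
  have hεN : T * (r0 + 2) < ε * N := by rwa [div_lt_iff₀' hε] at hN
  have hceil : (N : ℝ) / T ≤ ⌈(N : ℝ) / T⌉₊ := Nat.le_ceil _
  have hceil' : (⌈(N : ℝ) / T⌉₊ : ℝ) < N / T + 1 := Nat.ceil_lt_add_one (by positivity)
  refine ⟨N, r0 + ⌈(N : ℝ) / T⌉₊, Nat.cast_pos.mp hNpos, fun i j => ?_, ?_⟩
  · refine hr0 _ (Nat.le_add_right _ _) i _ (Nat.le_add_left _ _) ?_
    have hj : ((j : ℕ) : ℝ) + 1 ≤ N := by exact_mod_cast j.isLt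
    have : (N : ℝ) ≤ T * ⌈(N : ℝ) / T⌉₊ := by rwa [div_le_iff₀' hT] at hceil
    push_cast
    nlinarith
  · have : T * ⌈(N : ℝ) / T⌉₊ < N + T := by
      have := mul_lt_mul_of_pos_left hceil' hT
      rwa [mul_add, mul_div_cancel₀ _ hT.ne', mul_one] at this
    push_cast
    nlinarith

section SplitFlow

open Filter Topology

variable {V : Type*} [Fintype V] (G : SimpleGraph V) {K : ℕ} (F : Fin K → V × V)

def IsCapSplitFlow (cap : V → ℝ) (f : Fin K → V ⊕ V → V ⊕ V → ℝ) (val : ℝ) : Prop :=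
  (∀ (i : Fin K) (a b : V ⊕ V), 0 ≤ f i a b) ∧
  (∀ (i : Fin K) (a b : V ⊕ V), f i a b ≠ 0 →
    (∃ u w : V, a = inr u ∧ b = inl w ∧ G.Adj u w) ∨ (∃ w : V, a = inl w ∧ b = inr w)) ∧
  (∀ (i : Fin K) (a : V ⊕ V), a ≠ inl (F i).1 → a ≠ inr (F i).2 →
    ∑ b, f i b a = ∑ b, f i a b) ∧
  (∀ v : V, ∑ i, f i (inl v) (inr v) ≤ cap v) ∧
  (∀ i : Fin K, val ≤ ∑ b, f i (inl (F i).1) b)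

variable {G F}

theorem isSplitFlow_iff_isCapSplitFlow [DecidableEq V] {τ val : ℝ} {f : Fin K → V ⊕ V → V ⊕ V → ℝ} :
    IsSplitFlow G F τ f val ↔ IsCapSplitFlow G F (fun v => 1 + tOcc F v * τ / 2) f val :=
  Iff.rfl

theorem IsCapSplitFlow.mono {cap cap' : V → ℝ} {f : Fin K → V ⊕ V → V ⊕ V → ℝ} {val : ℝ}
    (h : IsCapSplitFlow G F cap f val) (hcap : ∀ v, cap v ≤ cap' v) :
    IsCapSplitFlow G F cap' f val :=
  ⟨h.1, h.2.1, h.2.2.1, fun v => (h.2.2.2.1 v).trans (hcap v), h.2.2.2.2⟩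

theorem isClosed_setOf_isCapSplitFlow (val : ℝ) :
    IsClosed {p : (V → ℝ) × (Fin K → V ⊕ V → V ⊕ V → ℝ) | IsCapSplitFlow G F p.1 p.2 val} := by
  simp only [IsCapSplitFlow, Set.ofPred_and, Set.ofPred_forall]
  refine .inter (isClosed_iInter fun i => isClosed_iInter fun a => isClosed_iInter fun b =>
    isClosed_le continuous_const (by fun_prop)) (.inter ?_ (.inter ?_ (.inter ?_ ?_)))
  · refine isClosed_iInter fun i => isClosed_iInter fun a => isClosed_iInter fun b => ?_
    by_cases hab : (∃ u w : V, a = inr u ∧ b = inl w ∧ G.Adj u w) ∨ ∃ w : V, a = inl w ∧ b = inr w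
    · simp only [hab, implies_true, Set.ofPred_true]
      exact isClosed_univ
    · simp only [hab, imp_false, not_not]
      exact isClosed_eq (by fun_prop) continuous_const
  · exact isClosed_iInter fun i => isClosed_iInter fun a => isClosed_iInter fun _ =>
      isClosed_iInter fun _ => isClosed_eq (by fun_prop) (by fun_prop)
  · exact isClosed_iInter fun v => isClosed_le (by fun_prop) (by fun_prop)
  · exact isClosed_iInter fun i => isClosed_le continuous_const (by fun_prop)

theorem exists_isCapSplitFlow_of_forall_pos {cap : V → ℝ} {B val : ℝ}
    (h : ∀ ε > 0, ∃ f : Fin K → V ⊕ V → V ⊕ V → ℝ,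
      (∀ i a b, f i a b ≤ B) ∧ IsCapSplitFlow G F (fun v => cap v + ε) f val) :
    ∃ f, IsCapSplitFlow G F cap f val := by
  choose f hfB hf using fun n : ℕ => h (1 / (n + 1)) Nat.one_div_pos_of_nat
  have hbox : IsCompact (Set.univ.pi fun _ : Fin K => Set.univ.pi fun _ : V ⊕ V =>
      Set.univ.pi fun _ : V ⊕ V => Set.Icc 0 B) :=
    isCompact_univ_pi fun _ => isCompact_univ_pi fun _ => isCompact_univ_pi fun _ => isCompact_Icc
  obtain ⟨g, -, φ, hφ, hfg⟩ := hbox.tendsto_subseq (x := f) fun n =>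
    Set.mem_univ_pi.mpr fun i => Set.mem_univ_pi.mpr fun a => Set.mem_univ_pi.mpr fun b =>
      ⟨(hf n).1 i a b, hfB n i a b⟩
  have hcap : Tendsto (fun n => fun v => cap v + 1 / ((φ n : ℝ) + 1)) atTop (𝓝 cap) := by
    refine tendsto_pi_nhds.mpr fun v => ?_
    simpa using (tendsto_const_nhds (x := cap v)).add
      (tendsto_one_div_add_atTop_nhds_zero_nat.comp hφ.tendsto_atTop)
  exact ⟨g, (isClosed_setOf_isCapSplitFlow val).mem_of_tendsto (hcap.prodMk_nhds hfg)
    (Eventually.of_forall fun n => hf (φ n))⟩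

end SplitFlow

section ScheduleFlow

variable {V : Type*} [Fintype V] [DecidableEq V] {G : SimpleGraph V} {K : ℕ}
  {F : Fin K → V × V}

theorem tOcc_eq_sum (hne : ∀ i, (F i).1 ≠ (F i).2) (v : V) :
    tOcc F v = ∑ i, ((if (F i).1 = v then 1 else 0) + if (F i).2 = v then 1 else 0) := by
  rw [tOcc, card_filter]
  refine sum_congr rfl fun i _ => ?_
  by_cases h1 : (F i).1 = v <;> by_cases h2 : (F i).2 = v <;> simp [h1, h2]
  exact hne i (h1.trans h2.symm)

theorem PairSchedule.two_mul_sum_count_support_le (hne : ∀ i, (F i).1 ≠ (F i).2)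
    (σ : PairSchedule G F) {N R : ℕ} (P : ∀ i : Fin K, Fin N → G.Walk (F i).1 (F i).2)
    (hP : ∀ i j, (P i j).IsPath) (hc : ∀ i (j : Fin N), σ.Carries (i, j + 1) R (P i j))
    (v : V) :
    2 * ∑ i, ∑ j, (P i j).support.count v ≤ R + 1 + N * tOcc F v := by
  have hpk : Function.Injective fun x : Fin K × Fin N => (x.1, (x.2 : ℕ) + 1) := by
    intro x y h
    simp only [Prod.mk.injEq, add_left_inj] at h
    exact Prod.ext h.1 (Fin.ext h.2)
  have hdarts := σ.sum_countP_incident_le hpk (fun x => P x.1 x.2) (fun x => hP x.1 x.2)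
    (fun x => hc x.1 x.2) v
  rw [Fintype.sum_prod_type] at hdarts
  calc 2 * ∑ i, ∑ j, (P i j).support.count v
      = ∑ i, ∑ j, ((P i j).darts.countP (fun e => e.fst = v ∨ e.snd = v) +
          ((if (F i).1 = v then 1 else 0) + if (F i).2 = v then 1 else 0)) := by
        simp only [mul_sum, SimpleGraph.Walk.two_mul_count_support]
    _ = ∑ i, ∑ j, (P i j).darts.countP (fun e => e.fst = v ∨ e.snd = v) + N * tOcc F v := by
        simp only [sum_add_distrib, sum_const, card_univ, Fintype.card_fin, smul_eq_mul,
          tOcc_eq_sum hne, mul_sum, mul_add]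
    _ ≤ R + 1 + N * tOcc F v := by gcongr

theorem PairSchedule.exists_isCapSplitFlow_of_delivered (hne : ∀ i, (F i).1 ≠ (F i).2)
    (σ : PairSchedule G F) {N R : ℕ} (hN : 0 < N)
    (hdel : ∀ i (j : Fin N), PDelivered σ i (j + 1) R) {τ : ℝ} (hτ : 0 ≤ τ) :
    ∃ f, (∀ i a b, f i a b ≤ τ) ∧
      IsCapSplitFlow G F (fun v => τ * (R + 1) / (2 * N) + tOcc F v * τ / 2) f τ := by
  choose P hP hc using fun i (j : Fin N) => σ.exists_isPath_carries_of_delivered (hdel i j)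
  have hN' : (0 : ℝ) < N := Nat.cast_pos.mpr hN
  refine ⟨fun i a b => τ / N * ∑ j, (P i j).splitFlow a b, fun i a b => ?_, fun i a b => ?_,
    fun i a b h => ?_, fun i a ha hb => ?_, fun v => ?_, fun i => ?_⟩
  · calc τ / N * ∑ j, (P i j).splitFlow a b ≤ τ / N * ∑ _ : Fin N, 1 := by
          gcongr with j; exact (hP i j).splitFlow_le_one a b
      _ = τ := by simp; field_simp
  · exact mul_nonneg (by positivity) (sum_nonneg fun j _ => (P i j).splitFlow_nonneg a b)
  · obtain ⟨j, -, hj⟩ := exists_ne_zero_of_sum_ne_zero (right_ne_zero_of_mul h)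
    exact (P i j).splitFlow_ne_zero hj
  · simp only [← mul_sum]
    rw [sum_comm]
    conv_rhs => rw [sum_comm]
    exact congrArg _ (sum_congr rfl fun j _ => (P i j).sum_splitFlow_comm ha hb)
  · have hload : (2 : ℝ) * ∑ i, ∑ j, ((P i j).support.count v : ℝ) ≤ R + 1 + N * tOcc F v := by
      exact_mod_cast σ.two_mul_sum_count_support_le hne P hP hc v
    simp only [← mul_sum, SimpleGraph.Walk.splitFlow_inl_inr]
    calc τ / N * ∑ i, ∑ j, ((P i j).support.count v : ℝ)
        ≤ τ / N * ((R + 1 + N * tOcc F v) / 2) := by gcongr; linarith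
      _ = τ * (R + 1) / (2 * N) + tOcc F v * τ / 2 := by field_simp
  · have hvisit : ∀ j, 1 ≤ (P i j).splitFlow (inl (F i).1) (inr (F i).1) := fun j => by
      rw [SimpleGraph.Walk.splitFlow_inl_inr, Nat.one_le_cast]
      exact List.count_pos_iff.mpr (P i j).start_mem_support
    calc τ = τ / N * ∑ _ : Fin N, (1 : ℝ) := by simp; field_simp
      _ ≤ τ / N * ∑ j, (P i j).splitFlow (inl (F i).1) (inr (F i).1) := by
        gcongr with j; exact hvisit j
      _ ≤ ∑ b, τ / N * ∑ j, (P i j).splitFlow (inl (F i).1) b :=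
        single_le_sum (f := fun b => τ / N * ∑ j, (P i j).splitFlow (inl (F i).1) b)
          (fun b _ => mul_nonneg (by positivity)
            (sum_nonneg fun j _ => (P i j).splitFlow_nonneg _ _)) (mem_univ _)

end ScheduleFlow

theorem stmt_13_general {V : Type*} [Fintype V] [DecidableEq V] (G : SimpleGraph V) {K : ℕ}
    (F : Fin K → V × V)
    (hne : ∀ i : Fin K, (F i).1 ≠ (F i).2)
    (σ : PairSchedule G F) (T : ℝ) (hT : 0 < T) (hthru : PThroughput σ T) :
    (∃ f : Fin K → (V ⊕ V) → (V ⊕ V) → ℝ, IsSplitFlow G F (2 * T) f (2 * T)) ∧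
    (∀ τs : ℝ,
      IsGreatest {τ : ℝ | ∃ f : Fin K → (V ⊕ V) → (V ⊕ V) → ℝ, IsSplitFlow G F τ f τ} τs →
      T ≤ τs / 2) := by
  have hflow : ∃ f, IsSplitFlow G F (2 * T) f (2 * T) := by
    simp only [isSplitFlow_iff_isCapSplitFlow]
    refine exists_isCapSplitFlow_of_forall_pos (B := 2 * T) fun ε hε => ?_
    obtain ⟨N, R, hN, hdel, hrate⟩ := hthru.exists_delivered hT hε
    obtain ⟨f, hfB, hf⟩ :=
      σ.exists_isCapSplitFlow_of_delivered hne hN hdel (τ := 2 * T) (by positivity)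
    refine ⟨f, hfB, hf.mono fun v => ?_⟩
    have : 2 * T * (R + 1) / (2 * N) ≤ 1 + ε := by
      rw [div_le_iff₀ (by positivity)]
      linarith
    linarith
  exact ⟨hflow, fun τs hτs => by linarith [hτs.2 hflow]⟩

/-- If a schedule achieves pairwise throughput `T` on `(G, F)` (with `F` consisting of
disjoint source/destination pairs), then the flow network `D_{2T}` admits a concurrent
multi-commodity flow of value `2T`; consequently, if `τ*` is the largest `τ` such that `D_τ`
has a concurrent flow of value `τ`, then `T ≤ τ*/2`. -/
theorem stmt_13 {V : Type*} [Fintype V] [DecidableEq V] (G : SimpleGraph V) {K : ℕ}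
    (hK : 1 ≤ K) (F : Fin K → V × V)
    (hne : ∀ i : Fin K, (F i).1 ≠ (F i).2)
    (hdisj : ∀ i j : Fin K, i ≠ j →
      (F i).1 ≠ (F j).1 ∧ (F i).1 ≠ (F j).2 ∧ (F i).2 ≠ (F j).1 ∧ (F i).2 ≠ (F j).2)
    (σ : PairSchedule G F) (T : ℝ) (hT : 0 < T) (hthru : PThroughput σ T) :
    (∃ f : Fin K → (V ⊕ V) → (V ⊕ V) → ℝ, IsSplitFlow G F (2 * T) f (2 * T)) ∧
    (∀ τs : ℝ,
      IsGreatest {τ : ℝ | ∃ f : Fin K → (V ⊕ V) → (V ⊕ V) → ℝ, IsSplitFlow G F τ f τ} τs →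
      T ≤ τs / 2) :=
  stmt_13_general G F hne σ T hT hthru
end

section
/- Consider a unit square partitioned into boxes of side length r and regions of 3×3 boxes, with n points placed independently and uniformly at random. If the eight boundary boxes of some region are empty and a point u lies in the center box of that region while another point v lies outside that box, and points within Euclidean distance r are joined by an edge, then u and v are in different connected components of the resulting graph. -/
/-!
Each coordinate of a neighbour of a point differs from the point's by at most `r`, so its box
index differs by at most one in each coordinate: a neighbour of a point of the center box lies in
the center box or in one of the eight surrounding boxes. When those are empty, adjacency never
leaves the center box, hence neither does reachability.
-/

/-- The point `x` of the plane lies in the grid box with indices `(a, b)` of side length `r`. -/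
def InBox (r : ℝ) (a b : ℤ) (x : EuclideanSpace ℝ (Fin 2)) : Prop :=
  (a : ℝ) * r ≤ x 0 ∧ x 0 < ((a : ℝ) + 1) * r ∧
  (b : ℝ) * r ≤ x 1 ∧ x 1 < ((b : ℝ) + 1) * r

theorem SimpleGraph.Reachable.invariant {V : Type*} {G : SimpleGraph V} {P : V → Prop}
    (hP : ∀ ⦃x y⦄, G.Adj x y → P x → P y) {u v : V} (h : G.Reachable u v) (hu : P u) :
    P v := by
  rw [SimpleGraph.reachable_iff_reflTransGen] at h
  induction h with
  | refl => exact hu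
  | tail _ hadj ih => exact hP hadj ih

theorem Int.abs_floor_sub_floor_le_one {R : Type*} [CommRing R] [LinearOrder R]
    [IsStrictOrderedRing R] [FloorRing R] {x y : R} (h : |x - y| ≤ 1) : |⌊x⌋ - ⌊y⌋| ≤ 1 := by
  obtain ⟨h₁, h₂⟩ := abs_le.1 h
  have hyx : ⌊y⌋ - 1 ≤ ⌊x⌋ := Int.le_floor.2 (by push_cast; linarith [Int.floor_le y])
  have hxy : ⌊x⌋ - 1 ≤ ⌊y⌋ := Int.le_floor.2 (by push_cast; linarith [Int.floor_le x])
  rw [abs_le]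
  omega

theorem abs_floor_div_sub_floor_div_le_one {r s t : ℝ} (hr : 0 < r) (h : |s - t| ≤ r) :
    |⌊t / r⌋ - ⌊s / r⌋| ≤ 1 := by
  apply Int.abs_floor_sub_floor_le_one
  rwa [← sub_div, abs_div, abs_of_pos hr, div_le_one hr, abs_sub_comm]

section InBox

variable {r : ℝ} {a b : ℤ} {x y : EuclideanSpace ℝ (Fin 2)}

theorem InBox.pos (h : InBox r a b x) : 0 < r := by
  obtain ⟨h₁, h₂, -, -⟩ := h
  linarith

theorem inBox_iff (hr : 0 < r) : InBox r a b x ↔ ⌊x 0 / r⌋ = a ∧ ⌊x 1 / r⌋ = b := by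
  simp only [InBox, Int.floor_eq_iff, le_div_iff₀ hr, div_lt_iff₀ hr, and_assoc]

theorem InBox.of_dist_le (hx : InBox r a b x)
    (hy : ∀ da db : ℤ, ¬(da = 0 ∧ db = 0) → |da| ≤ 1 → |db| ≤ 1 → ¬ InBox r (a + da) (b + db) y)
    (hxy : dist x y ≤ r) : InBox r a b y := by
  have hr := hx.pos
  have hcoord (i : Fin 2) : |x i - y i| ≤ r :=
    (Real.dist_eq (x i) (y i) ▸ PiLp.dist_apply_le x y i).trans hxy
  rw [inBox_iff hr] at hx ⊢
  obtain ⟨rfl, rfl⟩ := hx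
  by_contra hne
  refine hy (⌊y 0 / r⌋ - ⌊x 0 / r⌋) (⌊y 1 / r⌋ - ⌊x 1 / r⌋) (by omega)
    (abs_floor_div_sub_floor_div_le_one hr (hcoord 0))
    (abs_floor_div_sub_floor_div_le_one hr (hcoord 1)) ?_
  rw [inBox_iff hr]
  constructor <;> ring

end InBox

theorem stmt_14_general (n : ℕ) (r : ℝ) (p : Fin n → EuclideanSpace ℝ (Fin 2))
    (a b : ℤ)
    (hempty : ∀ i : Fin n, ∀ da db : ℤ, ¬(da = 0 ∧ db = 0) → |da| ≤ 1 → |db| ≤ 1 →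
      ¬ InBox r (a + da) (b + db) (p i))
    (u v : Fin n) (hu : InBox r a b (p u)) (hv : ¬ InBox r a b (p v)) :
    ¬ (SimpleGraph.fromRel (fun i j : Fin n => dist (p i) (p j) ≤ r)).Reachable u v := by
  refine fun hreach => hv (hreach.invariant (P := fun i => InBox r a b (p i)) ?_ hu)
  intro s t hadj hs
  have hdist : dist (p s) (p t) ≤ r := by
    rcases (SimpleGraph.fromRel_adj _ _ _).1 hadj with ⟨-, h | h⟩
    · exact h
    · rwa [dist_comm]
  exact hs.of_dist_le (hempty t) hdist

/-- Tile the plane by boxes of side `r` and consider the 3×3 region of boxes centered at box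
`(a, b)`.  If the eight boundary boxes of the region contain no points, a point `u` lies in
the center box and a point `v` lies outside it, then `u` and `v` lie in different connected
components of the geometric graph joining points at Euclidean distance at most `r`. -/
theorem stmt_14 (n : ℕ) (r : ℝ) (hr : 0 < r) (p : Fin n → EuclideanSpace ℝ (Fin 2))
    (a b : ℤ)
    (hempty : ∀ i : Fin n, ∀ da db : ℤ, ¬(da = 0 ∧ db = 0) → |da| ≤ 1 → |db| ≤ 1 →
      ¬ InBox r (a + da) (b + db) (p i))
    (u v : Fin n) (hu : InBox r a b (p u)) (hv : ¬ InBox r a b (p v)) :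
    ¬ (SimpleGraph.fromRel (fun i j : Fin n => dist (p i) (p j) ≤ r)).Reachable u v :=
  stmt_14_general n r p a b hempty u v hu hv
end

section
/- If a graph G on n vertices generated by placing points in a unit square covered by a k×k grid has at least one vertex in every grid box, and vertices in boxes sharing a side are adjacent, then G has a spanning tree of maximum degree at most 5; hence d(G) ≤ 5. -/
/-!
The boxes of the grid can be listed in boustrophedon order (row by row, alternating direction),
so that consecutive boxes share a side. Replacing each box by the vertices it contains lists all
vertices of `G` so that consecutive ones are adjacent: a Hamiltonian path of `G`, hence a spanning
tree of maximum degree at most `2`.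
-/

/-- `d(G)`: the minimum over spanning trees of `G` of the maximum degree of the tree. -/
noncomputable def minSpanningDegree {V : Type*} (G : SimpleGraph V) : ℕ :=
  sInf {k : ℕ | ∃ T : SimpleGraph V, T ≤ G ∧ T.IsTree ∧ ∀ v : V, Nat.card (T.neighborSet v) ≤ k}

/-- Two boxes of a `k × k` grid share a side. -/
def GridAdj (k : ℕ) (p q : Fin k × Fin k) : Prop :=
  (p.1 = q.1 ∧ ((p.2 : ℕ) + 1 = (q.2 : ℕ) ∨ (q.2 : ℕ) + 1 = (p.2 : ℕ))) ∨
  (p.2 = q.2 ∧ ((p.1 : ℕ) + 1 = (q.1 : ℕ) ∨ (q.1 : ℕ) + 1 = (p.1 : ℕ)))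

namespace SimpleGraph

theorem pathGraph_isAcyclic (n : ℕ) : (pathGraph n).IsAcyclic := by
  refine isAcyclic_iff_forall_adj_isBridge.mpr fun v w hadj ↦ ?_
  rw [pathGraph_adj] at hadj
  wlog! h : (v : ℕ) + 1 = w generalizing v w
  · rw [Sym2.eq_swap]
    exact this w v hadj.symm (hadj.resolve_left h)
  refine isBridge_iff_forall_walk_mem_edges.mpr fun p ↦ ?_
  -- a walk from `v` to `v + 1` has to leave `Set.Iic v`, and `s(v, v + 1)` is the only way out
  obtain ⟨d, hd, hfst, hsnd⟩ := p.exists_boundary_dart (Set.Iic v) (Set.mem_Iic.2 le_rfl)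
    (by simp only [Set.mem_Iic, not_le, Fin.lt_def]; omega)
  have hd' := pathGraph_adj.mp d.adj
  simp only [Set.mem_Iic, Fin.le_def, not_le] at hfst hsnd
  have hedge : d.edge = s(v, w) := by
    rw [Dart.edge, Sym2.eq_iff]
    left
    simp only [Fin.ext_iff]
    omega
  rw [← hedge, Walk.edges_eq_map_darts]
  exact List.mem_map_of_mem hd

theorem card_neighborSet_pathGraph_le_two {n : ℕ} (v : Fin n) :
    Nat.card ((pathGraph n).neighborSet v) ≤ 2 := by
  have hinj : Function.Injective
      fun u : (pathGraph n).neighborSet v ↦ decide ((v : ℕ) + 1 = u.1) := by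
    intro u₁ u₂ h
    have h₁ := pathGraph_adj.mp u₁.2
    have h₂ := pathGraph_adj.mp u₂.2
    simp only [decide_eq_decide] at h
    ext : 1
    rw [Fin.ext_iff]
    omega
  simpa using Nat.card_le_card_of_injective _ hinj

theorem exists_isTree_le_of_isChain {V : Type*} [Nonempty V] {G : SimpleGraph V} {l : List V}
    (hchain : l.IsChain G.Adj) (hnodup : l.Nodup) (hmem : ∀ v, v ∈ l) :
    ∃ T ≤ G, T.IsTree ∧ ∀ v, Nat.card (T.neighborSet v) ≤ 2 := by
  classical
  let e := hnodup.getEquivOfForallMemList l hmem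
  let φ := Iso.map e (pathGraph l.length)
  have hconsec : ∀ i j : Fin l.length, (i : ℕ) + 1 = j → G.Adj (e i) (e j) := by
    rintro ⟨i, hi⟩ ⟨j, hj⟩ (rfl : i + 1 = j)
    exact List.isChain_iff_getElem.mp hchain i hj
  refine ⟨_, ?_, φ.isTree_iff.mp ⟨?_, pathGraph_isAcyclic _⟩, fun v ↦ ?_⟩
  · rintro _ _ ⟨-, i, j, hij, rfl, rfl⟩
    exact (pathGraph_adj.mp hij).elim (hconsec i j) fun h ↦ (hconsec j i h).symm
  · have : Nonempty (Fin l.length) := .map e.symm ‹_›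
    exact (connected_iff _).2 ⟨pathGraph_preconnected _, ‹_›⟩
  · obtain ⟨i, rfl⟩ := e.surjective v
    exact (Nat.card_congr (φ.mapNeighborSet i)).symm.trans_le (card_neighborSet_pathGraph_le_two i)

theorem exists_isChain_of_blowup {V B : Type*} [Fintype V] {G : SimpleGraph V}
    {R : B → B → Prop} (β : V → B) (hsurj : Function.Surjective β)
    (hsame : ∀ u v, u ≠ v → β u = β v → G.Adj u v) (hadj : ∀ u v, R (β u) (β v) → G.Adj u v)
    {L : List B} (hchain : L.IsChain R) (hnodup : L.Nodup) (hmem : ∀ b, b ∈ L) :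
    ∃ l : List V, l.IsChain G.Adj ∧ l.Nodup ∧ ∀ v, v ∈ l := by
  classical
  let fiber (b : B) : List V := (Finset.univ.filter fun v ↦ β v = b).toList
  have mem_fiber {v : V} {b : B} : v ∈ fiber b ↔ β v = b := by simp [fiber]
  refine ⟨L.flatMap fiber, ?_, ?_, fun v ↦ List.mem_flatMap.2 ⟨β v, hmem _, mem_fiber.2 rfl⟩⟩
  · have hne : [] ∉ L.map fiber := by
      simp only [List.mem_map, not_exists, not_and]
      intro b _ hb
      obtain ⟨v, rfl⟩ := hsurj b
      simpa [hb] using (mem_fiber (v := v)).2 rfl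
    rw [List.flatMap, List.isChain_flatten hne, List.isChain_map]
    refine ⟨?_, hchain.imp fun a b hab x hx y hy ↦ hadj x y ?_⟩
    · simp only [List.mem_map, forall_exists_index, and_imp, forall_apply_eq_imp_iff₂]
      refine fun b _ ↦ List.Pairwise.isChain ((Finset.nodup_toList _).imp_of_mem ?_)
      intro u v hu hv huv
      exact hsame u v huv ((mem_fiber.1 hu).trans (mem_fiber.1 hv).symm)
    · rwa [mem_fiber.1 (List.mem_of_mem_getLast? hx), mem_fiber.1 (List.mem_of_mem_head? hy)]
  · refine List.nodup_flatMap.2 ⟨fun _ _ ↦ Finset.nodup_toList _, hnodup.imp fun hab ↦ ?_⟩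
    exact List.disjoint_left.2 fun _ hu hv ↦ hab ((mem_fiber.1 hu).symm.trans (mem_fiber.1 hv))

end SimpleGraph

def snakeRow (k : ℕ) (i : Fin k) : List (Fin k × Fin k) :=
  List.ofFn fun j ↦ (i, if Even (i : ℕ) then j else j.rev)

def gridSnake (k : ℕ) : List (Fin k × Fin k) :=
  (List.ofFn (snakeRow k)).flatten

theorem mem_gridSnake {k : ℕ} (p : Fin k × Fin k) : p ∈ gridSnake k := by
  refine List.mem_flatten.2 ⟨_, List.mem_ofFn.2 ⟨p.1, rfl⟩, List.mem_ofFn.2 ?_⟩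
  refine ⟨if Even (p.1 : ℕ) then p.2 else p.2.rev, ?_⟩
  split_ifs <;> simp

theorem nodup_gridSnake (k : ℕ) : (gridSnake k).Nodup := by
  refine List.nodup_flatten.2 ⟨?_, List.pairwise_ofFn.2 fun i i' hii' ↦ ?_⟩
  · simp only [List.mem_ofFn, forall_exists_index, forall_apply_eq_imp_iff]
    intro i
    refine List.nodup_ofFn.2 fun j j' h ↦ ?_
    split_ifs at h <;> simpa using h
  · simp only [snakeRow, List.disjoint_left, List.mem_ofFn]
    rintro _ ⟨j, rfl⟩ ⟨j', h⟩
    exact hii'.ne (congrArg Prod.fst h).symm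

theorem isChain_snakeRow (k : ℕ) (i : Fin k) : (snakeRow k i).IsChain (GridAdj k) := by
  refine List.isChain_ofFn.2 fun j hj ↦ Or.inl ⟨rfl, ?_⟩
  split_ifs
  · exact Or.inl rfl
  · simp only [Fin.val_rev]
    omega

theorem isChain_gridSnake (k : ℕ) : (gridSnake k).IsChain (GridAdj k) := by
  have hne : [] ∉ List.ofFn (snakeRow k) := by
    simp only [snakeRow, List.mem_ofFn, List.ofFn_eq_nil_iff, not_exists]
    exact fun i ↦ i.pos.ne'
  refine (List.isChain_flatten hne).2 ⟨?_, List.isChain_ofFn.2 fun i hi ↦ ?_⟩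
  · simp only [List.mem_ofFn, forall_exists_index, forall_apply_eq_imp_iff]
    exact isChain_snakeRow k
  -- row `i` ends and row `i + 1` starts in the same column, as the two have opposite parities
  · simp only [snakeRow, List.getLast?_eq_getElem?, List.head?_eq_getElem?, List.length_ofFn,
      List.getElem?_ofFn, tsub_lt_self_iff, Order.lt_one_iff, and_true, Option.mem_def,
      Option.dite_none_right_eq_some, Option.some.injEq, forall_exists_index,
      forall_apply_eq_imp_iff, Subsingleton.forall₂_iff]
    refine fun _ ↦ Or.inr ⟨?_, Or.inl rfl⟩
    simp only [Nat.even_add_one]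
    split_ifs <;> simp only [Fin.ext_iff, Fin.val_rev]
    omega

/-- If the vertices of a finite graph `G` are assigned to the boxes of a `k × k` grid so that
every box is nonempty, vertices in the same box are adjacent, and vertices in boxes sharing a
side are adjacent, then `G` has a spanning tree of maximum degree at most `5`; hence
`d(G) ≤ 5`. -/
theorem stmt_16 {V : Type*} [Fintype V] (G : SimpleGraph V) (k : ℕ) (hk : 1 ≤ k)
    (β : V → Fin k × Fin k) (hsurj : Function.Surjective β)
    (hsame : ∀ u v : V, u ≠ v → β u = β v → G.Adj u v)
    (hadj : ∀ u v : V, GridAdj k (β u) (β v) → G.Adj u v) :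
    (∃ T : SimpleGraph V, T ≤ G ∧ T.IsTree ∧ ∀ v : V, Nat.card (T.neighborSet v) ≤ 5) ∧
    minSpanningDegree G ≤ 5 := by
  have : Nonempty V := (hsurj (⟨0, hk⟩, ⟨0, hk⟩)).nonempty
  obtain ⟨l, hchain, hnodup, hmem⟩ := SimpleGraph.exists_isChain_of_blowup β hsurj hsame hadj
    (isChain_gridSnake k) (nodup_gridSnake k) mem_gridSnake
  obtain ⟨T, hTG, hT, hdeg⟩ := SimpleGraph.exists_isTree_le_of_isChain hchain hnodup hmem
  have hdeg5 : ∀ v, Nat.card (T.neighborSet v) ≤ 5 := fun v ↦ (hdeg v).trans (by norm_num)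
  exact ⟨⟨T, hTG, hT, hdeg5⟩, Nat.sInf_le ⟨T, hTG, hT, hdeg5⟩⟩
end
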